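/- For every integer k ≥ 2 and every integer d > k, in the random k-tree process the expected numbers of vertices of given degrees satisfy, for all n ≥ k+1, E[X_d(n+1)] = p_k(d−1, n)·E[X_{d−1}(n)] + (1 − p_k(d, n))·E[X_d(n)], where p_k(d, n) = ((k − 1)·d − k·(k − 2)) / (k·n − k² + 1). -/

import Mathlib

open MeasureTheory

/-- The complete graph on the vertices `0, …, m-1` inside `ℕ`. -/
def completeBelow (m : ℕ) : SimpleGraph ℕ :=
  SimpleGraph.fromRel (fun u v => u < m ∧ v < m)

/-- The graph obtained from `g` by joining the new vertex `n` to all vertices of `C`. -/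
def extendGraph (g : SimpleGraph ℕ) (n : ℕ) (C : Finset ℕ) : SimpleGraph ℕ :=
  SimpleGraph.fromRel (fun u v => g.Adj u v ∨ (u = n ∧ v ∈ C))

/-- The random `k`-tree process: `G (k+1)` is almost surely the complete graph on the
vertices `0, …, k` (representing `v₁, …, v_{k+1}`), and given `G n = g` (for `n ≥ k+1`),
a `k`-clique of `g` is chosen uniformly at random among all `k`-cliques of `g` and the
new vertex `n` (representing `v_{n+1}`) is joined to all of its `k` vertices. -/
structure IsRandomKTreeProcess (k : ℕ) {Ω : Type*} [MeasurableSpace Ω]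
    (μ : Measure Ω) (G : ℕ → Ω → SimpleGraph ℕ) : Prop where
  meas : ∀ n (g : SimpleGraph ℕ), MeasurableSet {ω | G n ω = g}
  init : μ {ω | G (k + 1) ω = completeBelow (k + 1)} = 1
  step : ∀ n, k + 1 ≤ n → ∀ g : SimpleGraph ℕ, ∀ C : Finset ℕ, g.IsNClique k C →
    μ {ω | G n ω = g ∧ G (n + 1) ω = extendGraph g n C}
      = μ {ω | G n ω = g} / ({D : Finset ℕ | g.IsNClique k D}.ncard : ENNReal)

/-- `degCount g n d` is the number of vertices of degree `d` in the graph `g` whose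
vertex set is `{0, …, n-1}`. -/
noncomputable def degCount (g : SimpleGraph ℕ) (n d : ℕ) : ℕ :=
  {v : ℕ | v < n ∧ (g.neighborSet v).ncard = d}.ncard

/-! Every graph the process can reach is a `k`-tree on `0, …, n-1` with `k n - k² + 1`
`k`-cliques, a vertex of degree `d` lying in `(k - 1) d - k (k - 2)` of them: both formulas
already hold for the complete graph on `k` vertices and survive joining a new vertex to a
`k`-clique. Joining the new vertex to `C` raises the degree of exactly the vertices of `C` by one,
so double counting (vertex, clique) pairs gives the average of `X_d(n+1)` over the uniformly
chosen clique in terms of `X_{d-1}(n)` and `X_d(n)`. At each time the process takes only finitely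
many values, so expectations are finite sums over them and the recurrence follows by summing
against `P(G n = g)`. -/

open Finset
open scoped Classical

section ExtendGraph

variable {g : SimpleGraph ℕ} {n k : ℕ} {C D : Finset ℕ}

theorem extendGraph_adj (hnC : n ∉ C) {u v : ℕ} :
    (extendGraph g n C).Adj u v ↔ g.Adj u v ∨ u = n ∧ v ∈ C ∨ v = n ∧ u ∈ C := by
  simp only [extendGraph, SimpleGraph.fromRel_adj]
  constructor
  · rintro ⟨-, (h | h) | (h | h)⟩
    exacts [.inl h, .inr (.inl h), .inl h.symm, .inr (.inr h)]
  · rintro (h | ⟨rfl, h⟩ | ⟨rfl, h⟩)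
    · exact ⟨h.ne, .inl (.inl h)⟩
    · exact ⟨fun huv => hnC (huv ▸ h), .inl (.inr ⟨rfl, h⟩)⟩
    · exact ⟨fun huv => hnC (huv ▸ h), .inr (.inr ⟨rfl, h⟩)⟩

theorem le_extendGraph : g ≤ extendGraph g n C := fun _ _ h => by
  simp only [extendGraph, SimpleGraph.fromRel_adj]
  exact ⟨h.ne, .inl (.inl h)⟩

theorem neighborSet_extendGraph_self (hnC : n ∉ C) (hn : ∀ v, ¬ g.Adj n v) :
    (extendGraph g n C).neighborSet n = C := by
  ext u
  simp only [SimpleGraph.mem_neighborSet, extendGraph_adj hnC, mem_coe]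
  grind

theorem neighborSet_extendGraph_of_ne (hnC : n ∉ C) {v : ℕ} (hv : v ≠ n) :
    (extendGraph g n C).neighborSet v
      = if v ∈ C then insert n (g.neighborSet v) else g.neighborSet v := by
  ext u
  split_ifs <;> simp only [SimpleGraph.mem_neighborSet, extendGraph_adj hnC,
    Set.mem_insert_iff] <;> grind

theorem isNClique_extendGraph_iff (hnC : n ∉ C) (hn : ∀ v, ¬ g.Adj n v)
    (hC : g.IsNClique k C) :
    (extendGraph g n C).IsNClique k D
      ↔ g.IsNClique k D ∨ ∃ w ∈ C, D = insert n (C.erase w) := by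
  constructor
  · intro hD
    by_cases hnD : n ∈ D
    · right
      have hsub : D.erase n ⊆ C := fun u hu => by
        have := hD.1 hnD (mem_of_mem_erase hu) (ne_of_mem_erase hu).symm
        rw [extendGraph_adj hnC] at this
        grind
      have hcard : #(D.erase n) + 1 = #C := by
        rw [card_erase_of_mem hnD, hD.2, hC.2]
        have := hD.2 ▸ card_pos.2 ⟨n, hnD⟩
        omega
      obtain ⟨w, hw, hsubw⟩ := ssubset_iff_exists_subset_erase.1
        (hsub.ssubset_of_ne fun h => by simp [h] at hcard)
      have hDw : D.erase n = C.erase w :=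
        eq_of_subset_of_card_le hsubw (by rw [card_erase_of_mem hw]; omega)
      exact ⟨w, hw, by rw [← hDw, insert_erase hnD]⟩
    · left
      refine ⟨fun u hu v hv huv => ?_, hD.2⟩
      have := hD.1 hu hv huv
      rw [extendGraph_adj hnC] at this
      grind
  · rintro (hD | ⟨w, hw, rfl⟩)
    · exact hD.mono le_extendGraph
    · refine (hC.mono le_extendGraph).insert_erase (fun u hu => ?_) hw
      rw [extendGraph_adj hnC]
      exact .inr (.inl ⟨rfl, (mem_sdiff.1 hu).1⟩)

end ExtendGraph

noncomputable def cliquesBelow (k n : ℕ) (g : SimpleGraph ℕ) : Finset (Finset ℕ) :=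
  {C ∈ (range n).powersetCard k | g.IsNClique k C}

theorem mem_cliquesBelow {k n : ℕ} {g : SimpleGraph ℕ} {C : Finset ℕ} :
    C ∈ cliquesBelow k n g ↔ g.IsNClique k C ∧ C ⊆ range n := by
  rw [cliquesBelow, mem_filter, mem_powersetCard]
  exact ⟨fun h => ⟨h.2, h.1.1⟩, fun h => ⟨⟨h.2, h.1.2⟩, h.1⟩⟩

theorem notMem_of_mem_cliquesBelow {k n : ℕ} {g : SimpleGraph ℕ} {C : Finset ℕ}
    (hC : C ∈ cliquesBelow k n g) : n ∉ C :=
  fun h => (mem_range.1 ((mem_cliquesBelow.1 hC).2 h)).false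

theorem injOn_insert_erase {n : ℕ} {C : Finset ℕ} (hnC : n ∉ C) :
    Set.InjOn (fun w => insert n (C.erase w)) C := by
  have key (w : ℕ) : (insert n (C.erase w)).erase n = C.erase w :=
    erase_insert fun h => hnC (mem_of_mem_erase h)
  intro w hw w' hw' h
  exact C.erase_injOn hw hw' (by rw [← key w, ← key w']; exact congrArg (·.erase n) h)

theorem disjoint_cliquesBelow_image {k n : ℕ} {g : SimpleGraph ℕ} (C : Finset ℕ) :
    Disjoint (cliquesBelow k n g) (C.image fun w => insert n (C.erase w)) := by
  refine disjoint_left.2 fun D hD hD' => ?_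
  obtain ⟨w, -, rfl⟩ := mem_image.1 hD'
  exact notMem_of_mem_cliquesBelow hD (mem_insert_self n _)

noncomputable def verticesOfDegree (g : SimpleGraph ℕ) (n d : ℕ) : Finset ℕ :=
  {v ∈ range n | (g.neighborSet v).ncard = d}

theorem degCount_eq_card_verticesOfDegree (g : SimpleGraph ℕ) (n d : ℕ) :
    degCount g n d = #(verticesOfDegree g n d) := by
  rw [degCount, ← Set.ncard_coe_finset, verticesOfDegree, coe_filter]
  simp only [mem_range]

/-- The paper's `p_k(d, n)` is the ratio of the two clique counts below for a vertex of
degree `d`. -/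
structure KTreeInvariant (k n : ℕ) (g : SimpleGraph ℕ) : Prop where
  lt_of_adj : ∀ ⦃u v⦄, g.Adj u v → u < n
  card_cliquesBelow : (#(cliquesBelow k n g) : ℤ) = k * n - k ^ 2 + 1
  card_cliquesBelow_mem : ∀ v < n,
    (#{C ∈ cliquesBelow k n g | v ∈ C} : ℤ) = (k - 1) * (g.neighborSet v).ncard - k * (k - 2)

namespace KTreeInvariant

variable {k n : ℕ} {g : SimpleGraph ℕ} {C : Finset ℕ}

theorem not_adj_self (hg : KTreeInvariant k n g) (v : ℕ) : ¬ g.Adj n v :=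
  fun h => (hg.lt_of_adj h).false

theorem neighborSet_subset (hg : KTreeInvariant k n g) (v : ℕ) :
    g.neighborSet v ⊆ Set.Iio n :=
  fun _ h => hg.lt_of_adj (g.adj_symm h)

theorem subset_range (hg : KTreeInvariant k n g) (hk : 2 ≤ k) {D : Finset ℕ}
    (hD : g.IsNClique k D) : D ⊆ range n := fun v hv => by
  obtain ⟨u, hu, huv⟩ := exists_mem_ne (by rw [hD.2]; omega) v
  exact mem_range.2 (hg.lt_of_adj (hD.1 hv hu huv.symm))

theorem mem_cliquesBelow_iff (hg : KTreeInvariant k n g) (hk : 2 ≤ k) {D : Finset ℕ} :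
    D ∈ cliquesBelow k n g ↔ g.IsNClique k D :=
  mem_cliquesBelow.trans ⟨And.left, fun hD => ⟨hD, hg.subset_range hk hD⟩⟩

theorem ncard_setOf_isNClique (hg : KTreeInvariant k n g) (hk : 2 ≤ k) :
    {D : Finset ℕ | g.IsNClique k D}.ncard = #(cliquesBelow k n g) := by
  rw [← Set.ncard_coe_finset]
  congr 1
  ext D
  exact (hg.mem_cliquesBelow_iff hk).symm

theorem cliquesBelow_extendGraph (hg : KTreeInvariant k n g) (hk : 2 ≤ k)
    (hC : C ∈ cliquesBelow k n g) :
    cliquesBelow k (n + 1) (extendGraph g n C)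
      = cliquesBelow k n g ∪ C.image fun w => insert n (C.erase w) := by
  have hCn := mem_cliquesBelow.1 hC
  ext D
  rw [mem_union, mem_image, mem_cliquesBelow, hg.mem_cliquesBelow_iff hk,
    isNClique_extendGraph_iff (notMem_of_mem_cliquesBelow hC) hg.not_adj_self hCn.1]
  constructor
  · rintro ⟨hD | ⟨w, hw, rfl⟩, -⟩
    exacts [.inl hD, .inr ⟨w, hw, rfl⟩]
  · rintro (hD | ⟨w, hw, rfl⟩)
    · exact ⟨.inl hD, (hg.subset_range hk hD).trans (range_subset_range.2 n.le_succ)⟩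
    · refine ⟨.inr ⟨w, hw, rfl⟩, insert_subset (by simp) ?_⟩
      exact (erase_subset w C).trans (hCn.2.trans (range_subset_range.2 n.le_succ))

theorem card_filter_cliquesBelow_extendGraph (hg : KTreeInvariant k n g) (hk : 2 ≤ k)
    (hC : C ∈ cliquesBelow k n g) (p : Finset ℕ → Prop) [DecidablePred p] :
    #{D ∈ cliquesBelow k (n + 1) (extendGraph g n C) | p D}
      = #{D ∈ cliquesBelow k n g | p D} + #{w ∈ C | p (insert n (C.erase w))} := by
  rw [hg.cliquesBelow_extendGraph hk hC, filter_union,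
    card_union_of_disjoint (disjoint_filter_filter (disjoint_cliquesBelow_image C)),
    filter_image, card_image_of_injOn
      ((injOn_insert_erase (notMem_of_mem_cliquesBelow hC)).mono (filter_subset _ _))]

theorem card_filter_mem_cliquesBelow_extendGraph_self (hg : KTreeInvariant k n g)
    (hk : 2 ≤ k) (hC : C ∈ cliquesBelow k n g) :
    #{D ∈ cliquesBelow k (n + 1) (extendGraph g n C) | n ∈ D} = k := by
  rw [hg.card_filter_cliquesBelow_extendGraph hk hC,
    filter_false_of_mem fun D hD => notMem_of_mem_cliquesBelow hD,
    filter_true_of_mem fun w _ => mem_insert_self n _, (mem_cliquesBelow.1 hC).1.2,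
    card_empty, zero_add]

theorem card_filter_mem_cliquesBelow_extendGraph_of_ne (hg : KTreeInvariant k n g)
    (hk : 2 ≤ k) (hC : C ∈ cliquesBelow k n g) {v : ℕ} (hv : v ≠ n) :
    (#{D ∈ cliquesBelow k (n + 1) (extendGraph g n C) | v ∈ D} : ℤ)
      = #{D ∈ cliquesBelow k n g | v ∈ D} + if v ∈ C then (k : ℤ) - 1 else 0 := by
  rw [hg.card_filter_cliquesBelow_extendGraph hk hC, Nat.cast_add]
  congr 1
  split_ifs with hvC
  · have hfilter : {w ∈ C | v ∈ insert n (C.erase w)} = C.erase v := by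
      ext w
      simp only [mem_filter, mem_insert, mem_erase, hv, false_or]
      grind
    rw [hfilter, card_erase_of_mem hvC, (mem_cliquesBelow.1 hC).1.2, Nat.cast_sub (by omega)]
    rfl
  · rw [filter_false_of_mem fun w _ => by simp only [mem_insert, mem_erase, hv, false_or]; grind]
    rfl

theorem ncard_neighborSet_extendGraph_self (hg : KTreeInvariant k n g)
    (hC : C ∈ cliquesBelow k n g) : ((extendGraph g n C).neighborSet n).ncard = k := by
  rw [neighborSet_extendGraph_self (notMem_of_mem_cliquesBelow hC) hg.not_adj_self,
    Set.ncard_coe_finset, (mem_cliquesBelow.1 hC).1.2]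

theorem ncard_neighborSet_extendGraph_of_ne (hg : KTreeInvariant k n g)
    (hC : C ∈ cliquesBelow k n g) {v : ℕ} (hv : v ≠ n) :
    ((extendGraph g n C).neighborSet v).ncard
      = (g.neighborSet v).ncard + if v ∈ C then 1 else 0 := by
  rw [neighborSet_extendGraph_of_ne (notMem_of_mem_cliquesBelow hC) hv]
  split_ifs
  · exact Set.ncard_insert_of_notMem (fun h => (hg.neighborSet_subset v h).out.false)
      ((Set.finite_Iio n).subset (hg.neighborSet_subset v))
  · rfl

theorem extend (hg : KTreeInvariant k n g) (hk : 2 ≤ k) (hC : C ∈ cliquesBelow k n g) :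
    KTreeInvariant k (n + 1) (extendGraph g n C) where
  lt_of_adj u v h := by
    rw [extendGraph_adj (notMem_of_mem_cliquesBelow hC)] at h
    rcases h with h | ⟨rfl, -⟩ | ⟨-, h⟩
    · exact (hg.lt_of_adj h).trans (Nat.lt_add_one _)
    · exact (Nat.lt_add_one _)
    · exact (mem_range.1 ((mem_cliquesBelow.1 hC).2 h)).trans (Nat.lt_add_one _)
  card_cliquesBelow := by
    rw [hg.cliquesBelow_extendGraph hk hC, card_union_of_disjoint (disjoint_cliquesBelow_image C),
      card_image_of_injOn (injOn_insert_erase (notMem_of_mem_cliquesBelow hC)),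
      (mem_cliquesBelow.1 hC).1.2, Nat.cast_add, hg.card_cliquesBelow]
    push_cast
    ring
  card_cliquesBelow_mem v hv := by
    rcases eq_or_ne v n with rfl | hvn
    · rw [hg.card_filter_mem_cliquesBelow_extendGraph_self hk hC,
        hg.ncard_neighborSet_extendGraph_self hC]
      ring
    · rw [hg.card_filter_mem_cliquesBelow_extendGraph_of_ne hk hC hvn,
        hg.ncard_neighborSet_extendGraph_of_ne hC hvn, hg.card_cliquesBelow_mem v (by omega)]
      split_ifs <;> push_cast <;> ring

theorem card_cliquesBelow_pos (hg : KTreeInvariant k n g) (hn : k ≤ n) :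
    0 < #(cliquesBelow k n g) := by
  have hcard := hg.card_cliquesBelow
  have : (k : ℤ) * k ≤ k * n := mul_le_mul_of_nonneg_left (by exact_mod_cast hn) (by positivity)
  have : (0 : ℤ) < #(cliquesBelow k n g) := by linarith
  exact_mod_cast this

theorem injOn_extendGraph (hg : KTreeInvariant k n g) :
    Set.InjOn (extendGraph g n) (cliquesBelow k n g) := fun C hC C' hC' h => by
  have := congrArg (·.neighborSet n) h
  simp only [neighborSet_extendGraph_self (notMem_of_mem_cliquesBelow hC) hg.not_adj_self,
    neighborSet_extendGraph_self (notMem_of_mem_cliquesBelow hC') hg.not_adj_self] at this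
  exact_mod_cast this

theorem pairwiseDisjoint_step {Ω : Type*} (hg : KTreeInvariant k n g)
    (G : ℕ → Ω → SimpleGraph ℕ) :
    (cliquesBelow k n g : Set (Finset ℕ)).PairwiseDisjoint
      fun C => {ω | G n ω = g ∧ G (n + 1) ω = extendGraph g n C} :=
  fun _ hC _ hC' hne => Set.disjoint_left.2 fun _ h h' =>
    hne (hg.injOn_extendGraph hC hC' (h.2.symm.trans h'.2))

theorem degCount_extendGraph (hg : KTreeInvariant k n g) (hC : C ∈ cliquesBelow k n g)
    {d : ℕ} (hd : k < d) :
    (degCount (extendGraph g n C) (n + 1) d : ℤ)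
      = degCount g n d + #(verticesOfDegree g n (d - 1) ∩ C)
        - #(verticesOfDegree g n d ∩ C) := by
  have hsplit : verticesOfDegree (extendGraph g n C) (n + 1) d
      = verticesOfDegree g n (d - 1) ∩ C ∪ verticesOfDegree g n d \ C := by
    ext v
    rcases eq_or_ne v n with rfl | hvn
    · simp [verticesOfDegree, hg.ncard_neighborSet_extendGraph_self hC, hd.ne,
        notMem_of_mem_cliquesBelow hC]
    · simp only [verticesOfDegree, mem_filter, mem_range, mem_union, mem_inter, mem_sdiff,
        hg.ncard_neighborSet_extendGraph_of_ne hC hvn]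
      by_cases hvC : v ∈ C <;> simp only [hvC, if_true, if_false, and_true, and_false,
        not_true, not_false_eq_true, or_false, false_or] <;> omega
  have hdisj : Disjoint (verticesOfDegree g n (d - 1) ∩ C) (verticesOfDegree g n d \ C) :=
    disjoint_left.2 fun v h h' => (mem_sdiff.1 h').2 (mem_inter.1 h).2
  have hcount := card_sdiff_add_card_inter (verticesOfDegree g n d) C
  rw [degCount_eq_card_verticesOfDegree, degCount_eq_card_verticesOfDegree, hsplit,
    card_union_of_disjoint hdisj, ← hcount]
  push_cast
  ring

theorem sum_card_verticesOfDegree_inter (hg : KTreeInvariant k n g) (e : ℕ) :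
    ∑ C ∈ cliquesBelow k n g, (#(verticesOfDegree g n e ∩ C) : ℤ)
      = ((k - 1) * e - k * (k - 2)) * degCount g n e := by
  have hdouble := sum_card_bipartiteAbove_eq_sum_card_bipartiteBelow (fun C v => v ∈ C)
    (s := cliquesBelow k n g) (t := verticesOfDegree g n e)
  simp only [bipartiteAbove, bipartiteBelow, filter_mem_eq_inter] at hdouble
  calc ∑ C ∈ cliquesBelow k n g, (#(verticesOfDegree g n e ∩ C) : ℤ)
      = ∑ v ∈ verticesOfDegree g n e, (#{C ∈ cliquesBelow k n g | v ∈ C} : ℤ) := by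
        exact_mod_cast hdouble
    _ = ∑ v ∈ verticesOfDegree g n e, ((k - 1) * (e : ℤ) - k * (k - 2)) := by
        refine sum_congr rfl fun v hv => ?_
        obtain ⟨hv, hdeg⟩ := mem_filter.1 hv
        rw [hg.card_cliquesBelow_mem v (mem_range.1 hv), hdeg]
    _ = _ := by rw [sum_const, nsmul_eq_mul, degCount_eq_card_verticesOfDegree, mul_comm]

theorem sum_degCount_extendGraph (hg : KTreeInvariant k n g) {d : ℕ} (hd : k < d) :
    ∑ C ∈ cliquesBelow k n g, (degCount (extendGraph g n C) (n + 1) d : ℤ)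
      = ((k - 1) * ((d : ℤ) - 1) - k * (k - 2)) * degCount g n (d - 1)
        + ((k * n - k ^ 2 + 1) - ((k - 1) * d - k * (k - 2))) * degCount g n d := by
  rw [sum_congr rfl fun C hC => hg.degCount_extendGraph hC hd, sum_sub_distrib, sum_add_distrib,
    hg.sum_card_verticesOfDegree_inter, hg.sum_card_verticesOfDegree_inter, sum_const,
    nsmul_eq_mul, hg.card_cliquesBelow, Nat.cast_sub (by omega : 1 ≤ d)]
  push_cast
  ring

end KTreeInvariant

theorem completeBelow_succ (m : ℕ) :
    completeBelow (m + 1) = extendGraph (completeBelow m) m (range m) := by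
  ext u v
  simp only [completeBelow, extendGraph, SimpleGraph.fromRel_adj, mem_range]
  omega

theorem cliquesBelow_completeBelow (k : ℕ) : cliquesBelow k k (completeBelow k) = {range k} := by
  ext C
  rw [mem_cliquesBelow, mem_singleton]
  constructor
  · exact fun h => eq_of_subset_of_card_le h.2 (by rw [card_range, h.1.2])
  · rintro rfl
    refine ⟨⟨fun u hu v hv huv => ?_, card_range k⟩, subset_rfl⟩
    simp_all [completeBelow]

theorem ncard_neighborSet_completeBelow {k v : ℕ} (hv : v < k) :
    ((completeBelow k).neighborSet v).ncard = k - 1 := by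
  have : (completeBelow k).neighborSet v = ↑((range k).erase v) := by
    ext u
    simp only [completeBelow, SimpleGraph.mem_neighborSet, SimpleGraph.fromRel_adj, coe_erase,
      coe_range, Set.mem_sdiff, Set.mem_Iio, Set.mem_singleton_iff]
    omega
  rw [this, Set.ncard_coe_finset, card_erase_of_mem (mem_range.2 hv), card_range]

theorem kTreeInvariant_completeBelow (k : ℕ) : KTreeInvariant k k (completeBelow k) where
  lt_of_adj u v h := by
    simp only [completeBelow, SimpleGraph.fromRel_adj] at h
    omega
  card_cliquesBelow := by
    rw [cliquesBelow_completeBelow, card_singleton]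
    push_cast
    ring
  card_cliquesBelow_mem v hv := by
    rw [cliquesBelow_completeBelow, filter_singleton, if_pos (mem_range.2 hv), card_singleton,
      ncard_neighborSet_completeBelow hv, Nat.cast_sub (by omega)]
    push_cast
    ring

/-- `kTrees k m` contains every value the process can take at time `k + 1 + m`. -/
noncomputable def kTrees (k : ℕ) : ℕ → Finset (SimpleGraph ℕ)
  | 0 => {completeBelow (k + 1)}
  | m + 1 => (kTrees k m).biUnion fun g =>
      (cliquesBelow k (k + 1 + m) g).image (extendGraph g (k + 1 + m))

theorem kTreeInvariant_of_mem_kTrees {k : ℕ} (hk : 2 ≤ k) :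
    ∀ {m : ℕ} {g : SimpleGraph ℕ}, g ∈ kTrees k m → KTreeInvariant k (k + 1 + m) g
  | 0, g, hg => by
    rw [kTrees, mem_singleton] at hg
    rw [hg, completeBelow_succ]
    exact (kTreeInvariant_completeBelow k).extend hk
      (by rw [cliquesBelow_completeBelow]; exact mem_singleton_self _)
  | m + 1, g, hg => by
    simp only [kTrees, mem_biUnion, mem_image] at hg
    obtain ⟨g, hg, C, hC, rfl⟩ := hg
    exact (kTreeInvariant_of_mem_kTrees hk hg).extend hk hC

theorem integral_eq_sum_of_ae_cover {Ω ι : Type*} [MeasurableSpace Ω] {μ : Measure Ω}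
    [IsFiniteMeasure μ] {s : Finset ι} {E : ι → Set Ω} (hE : ∀ i ∈ s, MeasurableSet (E i))
    (hdisj : (s : Set ι).PairwiseDisjoint E) (hcover : ∀ᵐ ω ∂μ, ∃ i ∈ s, ω ∈ E i)
    {f : Ω → ℝ} {c : ι → ℝ} (hf : ∀ i ∈ s, ∀ ω ∈ E i, f ω = c i) :
    ∫ ω, f ω ∂μ = ∑ i ∈ s, μ.real (E i) * c i := by
  have hae : f =ᵐ[μ] fun ω => ∑ i ∈ s, (E i).indicator (fun _ => c i) ω := by
    filter_upwards [hcover] with ω ⟨i, hi, hω⟩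
    rw [sum_eq_single_of_mem i hi fun j hj hji =>
      Set.indicator_of_notMem (fun hω' => hji (hdisj.elim_set hj hi ω hω' hω)) _,
      Set.indicator_of_mem hω, hf i hi ω hω]
  rw [integral_congr_ae hae,
    integral_finsetSum s fun i hi => (integrable_const (c i)).indicator (hE i hi)]
  exact sum_congr rfl fun i hi => integral_indicator_const _ (hE i hi)

namespace IsRandomKTreeProcess

variable {k : ℕ} {Ω : Type*} [MeasurableSpace Ω] {μ : Measure Ω}
  {G : ℕ → Ω → SimpleGraph ℕ}

theorem measurableSet_step (hG : IsRandomKTreeProcess k μ G) (n : ℕ) (g : SimpleGraph ℕ)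
    (C : Finset ℕ) : MeasurableSet {ω | G n ω = g ∧ G (n + 1) ω = extendGraph g n C} :=
  (hG.meas n g).inter (hG.meas (n + 1) _)

theorem measure_step (hG : IsRandomKTreeProcess k μ G) (hk : 2 ≤ k) {n : ℕ} (hn : k + 1 ≤ n)
    {g : SimpleGraph ℕ} (hg : KTreeInvariant k n g) {C : Finset ℕ}
    (hC : C ∈ cliquesBelow k n g) :
    μ {ω | G n ω = g ∧ G (n + 1) ω = extendGraph g n C}
      = μ {ω | G n ω = g} / #(cliquesBelow k n g) := by
  rw [hG.step n hn g C ((hg.mem_cliquesBelow_iff hk).1 hC), hg.ncard_setOf_isNClique hk]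

theorem ae_exists_step [IsFiniteMeasure μ] (hG : IsRandomKTreeProcess k μ G) (hk : 2 ≤ k)
    {n : ℕ} (hn : k + 1 ≤ n) {g : SimpleGraph ℕ} (hg : KTreeInvariant k n g) :
    ∀ᵐ ω ∂μ, G n ω = g →
      ∃ C ∈ cliquesBelow k n g, G (n + 1) ω = extendGraph g n C := by
  set S := ⋃ C ∈ cliquesBelow k n g, {ω | G n ω = g ∧ G (n + 1) ω = extendGraph g n C}
  have hS : μ S = μ {ω | G n ω = g} := by
    rw [measure_biUnion_finset (hg.pairwiseDisjoint_step G)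
        fun C _ => hG.measurableSet_step n g C,
      sum_congr rfl fun C hC => hG.measure_step hk hn hg hC, sum_const, nsmul_eq_mul,
      ENNReal.mul_div_cancel (by exact_mod_cast (hg.card_cliquesBelow_pos (by omega)).ne')
        (ENNReal.natCast_ne_top _)]
  have hnull : μ ({ω | G n ω = g} \ S) = 0 := by
    have hsub : S ⊆ {ω | G n ω = g} := Set.iUnion₂_subset fun C _ _ h => h.1
    rw [measure_sdiff hsub
      (Finset.measurableSet_biUnion _ fun C _ => hG.measurableSet_step n g C).nullMeasurableSet
      (measure_ne_top μ S), hS, tsub_self]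
  filter_upwards [measure_eq_zero_iff_ae_notMem.1 hnull] with ω hω hgω
  simpa [S, hgω] using hω

theorem ae_exists_step_of_ae_mem_kTrees [IsFiniteMeasure μ] (hG : IsRandomKTreeProcess k μ G)
    (hk : 2 ≤ k) {m : ℕ} (hm : ∀ᵐ ω ∂μ, G (k + 1 + m) ω ∈ kTrees k m) :
    ∀ᵐ ω ∂μ, ∃ g ∈ kTrees k m, ∃ C ∈ cliquesBelow k (k + 1 + m) g,
      G (k + 1 + m) ω = g ∧ G (k + 1 + m + 1) ω = extendGraph g (k + 1 + m) C := by
  have hstep := (Filter.eventually_all_finset (kTrees k m)).2 fun g hg =>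
    hG.ae_exists_step hk (by omega) (kTreeInvariant_of_mem_kTrees hk hg)
  filter_upwards [hm, hstep] with ω hω hstep
  obtain ⟨C, hC, hCω⟩ := hstep _ hω rfl
  exact ⟨_, hω, C, hC, rfl, hCω⟩

variable [IsProbabilityMeasure μ]

theorem ae_mem_kTrees (hG : IsRandomKTreeProcess k μ G) (hk : 2 ≤ k) :
    ∀ m, ∀ᵐ ω ∂μ, G (k + 1 + m) ω ∈ kTrees k m
  | 0 => by
    have := (ae_iff_measure_eq (hG.meas (k + 1) _).nullMeasurableSet).2
      (by rw [hG.init, measure_univ])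
    simpa [kTrees] using this
  | m + 1 => by
    filter_upwards [hG.ae_exists_step_of_ae_mem_kTrees hk (hG.ae_mem_kTrees hk m)] with ω hω
    obtain ⟨g, hg, C, hC, -, hω⟩ := hω
    simp only [kTrees, mem_biUnion, mem_image]
    exact ⟨g, hg, C, hC, hω.symm⟩

theorem integral_comp (hG : IsRandomKTreeProcess k μ G) (hk : 2 ≤ k) (m : ℕ)
    (f : SimpleGraph ℕ → ℝ) :
    ∫ ω, f (G (k + 1 + m) ω) ∂μ
      = ∑ g ∈ kTrees k m, μ.real {ω | G (k + 1 + m) ω = g} * f g :=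
  integral_eq_sum_of_ae_cover (fun g _ => hG.meas _ g)
    (fun _ _ _ _ hne => Set.disjoint_left.2 fun _ h h' => hne (h.symm.trans h'))
    ((hG.ae_mem_kTrees hk m).mono fun _ h => ⟨_, h, rfl⟩) fun _ _ _ h => by rw [h]

theorem integral_comp_succ (hG : IsRandomKTreeProcess k μ G) (hk : 2 ≤ k) (m : ℕ)
    (f : SimpleGraph ℕ → ℝ) :
    ∫ ω, f (G (k + 1 + m + 1) ω) ∂μ
      = ∑ g ∈ kTrees k m, μ.real {ω | G (k + 1 + m) ω = g} *
          ((∑ C ∈ cliquesBelow k (k + 1 + m) g, f (extendGraph g (k + 1 + m) C))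
            / #(cliquesBelow k (k + 1 + m) g)) := by
  set n := k + 1 + m
  rw [integral_eq_sum_of_ae_cover (s := (kTrees k m).sigma fun g => cliquesBelow k n g)
    (E := fun p => {ω | G n ω = p.1 ∧ G (n + 1) ω = extendGraph p.1 n p.2})
    (c := fun p => f (extendGraph p.1 n p.2)) (fun p _ => hG.measurableSet_step n p.1 p.2)
    ?disj ?cover fun p _ ω h => by rw [h.2], sum_sigma]
  · refine sum_congr rfl fun g hg => ?_
    have hinv := kTreeInvariant_of_mem_kTrees hk hg
    have hstep : ∀ C ∈ cliquesBelow k n g,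
        μ.real {ω | G n ω = g ∧ G (n + 1) ω = extendGraph g n C}
          = μ.real {ω | G n ω = g} / #(cliquesBelow k n g) := fun C hC => by
      rw [measureReal_def, hG.measure_step hk (by omega) hinv hC, ENNReal.toReal_div,
        ENNReal.toReal_natCast, measureReal_def]
    rw [sum_congr rfl fun C hC => by rw [hstep C hC], ← mul_sum]
    ring
  case disj =>
    rintro ⟨g, C⟩ hgC ⟨g', C'⟩ hgC' hne
    refine Set.disjoint_left.2 fun ω h h' => hne ?_
    obtain rfl : g = g' := h.1.symm.trans h'.1
    rw [mem_coe, mem_sigma] at hgC hgC'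
    exact congrArg _ ((kTreeInvariant_of_mem_kTrees hk hgC.1).injOn_extendGraph hgC.2 hgC'.2
      (h.2.symm.trans h'.2))
  case cover =>
    filter_upwards [hG.ae_exists_step_of_ae_mem_kTrees hk (hG.ae_mem_kTrees hk m)] with ω hω
    obtain ⟨g, hg, C, hC, hω⟩ := hω
    exact ⟨⟨g, C⟩, mem_sigma.2 ⟨hg, hC⟩, hω⟩

end IsRandomKTreeProcess

/-- For every integer `k ≥ 2` and every integer `d > k`, in the random `k`-tree process
the expected numbers of vertices of given degrees satisfy, for all `n ≥ k+1`,
`E[X_d(n+1)] = p_k(d−1, n)·E[X_{d−1}(n)] + (1 − p_k(d, n))·E[X_d(n)]`, where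
`p_k(d, n) = ((k − 1)·d − k·(k − 2)) / (k·n − k² + 1)`. -/
theorem expected_degree_count_recurrence (k : ℕ) (hk : 2 ≤ k)
    {Ω : Type} [MeasurableSpace Ω] (μ : Measure Ω) [IsProbabilityMeasure μ]
    (G : ℕ → Ω → SimpleGraph ℕ) (hG : IsRandomKTreeProcess k μ G)
    (d : ℕ) (hd : k < d) (n : ℕ) (hn : k + 1 ≤ n) :
    ∫ ω, (degCount (G (n + 1) ω) (n + 1) d : ℝ) ∂μ
      = (((k : ℝ) - 1) * ((d : ℝ) - 1) - (k : ℝ) * ((k : ℝ) - 2))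
          / ((k : ℝ) * n - (k : ℝ) ^ 2 + 1)
          * ∫ ω, (degCount (G n ω) n (d - 1) : ℝ) ∂μ
      + (1 - (((k : ℝ) - 1) * (d : ℝ) - (k : ℝ) * ((k : ℝ) - 2))
          / ((k : ℝ) * n - (k : ℝ) ^ 2 + 1))
          * ∫ ω, (degCount (G n ω) n d : ℝ) ∂μ := by
  obtain ⟨m, rfl⟩ := Nat.exists_eq_add_of_le hn
  rw [hG.integral_comp_succ hk m fun g => (degCount g (k + 1 + m + 1) d : ℝ),
    hG.integral_comp hk m fun g => (degCount g (k + 1 + m) (d - 1) : ℝ),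
    hG.integral_comp hk m fun g => (degCount g (k + 1 + m) d : ℝ), mul_sum, mul_sum,
    ← sum_add_distrib]
  refine sum_congr rfl fun g hg => ?_
  have hinv := kTreeInvariant_of_mem_kTrees hk hg
  have hsum : ∑ C ∈ cliquesBelow k (k + 1 + m) g,
      (degCount (extendGraph g (k + 1 + m) C) (k + 1 + m + 1) d : ℝ)
        = ((k - 1) * ((d : ℝ) - 1) - k * (k - 2)) * degCount g (k + 1 + m) (d - 1)
          + ((k * ↑(k + 1 + m) - k ^ 2 + 1) - ((k - 1) * d - k * (k - 2)))
            * degCount g (k + 1 + m) d := by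
    exact_mod_cast hinv.sum_degCount_extendGraph hd
  have hcard : (#(cliquesBelow k (k + 1 + m) g) : ℝ) = k * ↑(k + 1 + m) - k ^ 2 + 1 := by
    exact_mod_cast hinv.card_cliquesBelow
  have hpos : (0 : ℝ) < #(cliquesBelow k (k + 1 + m) g) := by
    exact_mod_cast hinv.card_cliquesBelow_pos (by omega)
  rw [hsum, ← hcard]
  field_simp
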